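/- Let G be a finite connected simple graph with an injective edge-weight function w. Then the spanning subgraph of G whose edge set consists of exactly those edges e = uv for which there is no path in G between u and v using only edges of weight strictly less than w(e) is a minimum-weight spanning tree of G. -/

import Mathlib

open SimpleGraph Finset

variable {V : Type*}

/-- `T` is a spanning tree of `G`: a subgraph on the same vertex set that is a tree. -/
def IsSpanningTree (G T : SimpleGraph V) : Prop :=
  T ≤ G ∧ T.IsTree

/-- The total weight of the edges of a graph. -/
noncomputable def totalWeight [Fintype V] (T : SimpleGraph V) (w : Sym2 V → ℝ) : ℝ :=
  ∑ e ∈ T.edgeSet.toFinite.toFinset, w e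

/-- `T` is a minimum-weight spanning tree of `G` with respect to `w`. -/
def IsMinSpanningTree [Fintype V] (G T : SimpleGraph V) (w : Sym2 V → ℝ) : Prop :=
  IsSpanningTree G T ∧
    ∀ T' : SimpleGraph V, IsSpanningTree G T' → totalWeight T w ≤ totalWeight T' w

/-! `T` is the graph of edges `xy` that are not spanned by the edges lighter than `xy`. It is
acyclic: around a cycle, its heaviest edge is spanned by the other, lighter edges. Take a
minimum spanning tree `T₀`. If an edge `xy` of `T₀` were missing from `T`, the lighter
`x`–`y` path would cross the cut of `T₀ - xy` along a lighter edge, and exchanging `xy` for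
it would give a lighter spanning tree. Hence `T₀ ≤ T`, and since a tree is maximal acyclic,
`T₀ = T`. -/

namespace SimpleGraph

variable {G H T : SimpleGraph V} {w : Sym2 V → ℝ}

def lightSubgraph (G : SimpleGraph V) (w : Sym2 V → ℝ) (t : ℝ) : SimpleGraph V :=
  G.deleteEdges {e | t ≤ w e}

lemma lightSubgraph_mono (h : G ≤ H) (t : ℝ) : G.lightSubgraph w t ≤ H.lightSubgraph w t :=
  deleteEdges_mono h

lemma exists_isPath_forall_lt_iff_reachable_lightSubgraph {u v : V} {t : ℝ} :
    (∃ p : G.Walk u v, p.IsPath ∧ ∀ e ∈ p.edges, w e < t) ↔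
      (G.lightSubgraph w t).Reachable u v := by
  classical
  constructor
  · rintro ⟨p, -, hp⟩
    exact ⟨p.toDeleteEdges _ fun e he => not_le.mpr (hp e he)⟩
  · rintro ⟨p⟩
    let q := p.mapLe (deleteEdges_le _)
    refine ⟨q.toPath, q.toPath.2, fun e he => ?_⟩
    have hep : e ∈ p.edges := Walk.edges_mapLe_eq_edges _ p ▸ q.edges_toPath_subset_edges he
    have := p.edges_subset_edgeSet hep
    simp only [lightSubgraph, edgeSet_deleteEdges] at this
    exact not_le.mp this.2

lemma Reachable.exists_adj_of_not_reachable {F : SimpleGraph V} {x y : V} (h : H.Reachable x y)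
    (hF : ¬F.Reachable x y) : ∃ a b, H.Adj a b ∧ F.Reachable x a ∧ ¬F.Reachable x b := by
  obtain ⟨p⟩ := h
  obtain ⟨d, -, ha, hb⟩ := p.exists_boundary_dart {z | F.Reachable x z} (Reachable.refl x) hF
  exact ⟨d.fst, d.snd, d.adj, ha, hb⟩

lemma Connected.reachable_deleteEdges_or (hG : G.Connected) (x y z : V) :
    (G.deleteEdges {s(x, y)}).Reachable z x ∨ (G.deleteEdges {s(x, y)}).Reachable z y := by
  classical
  obtain ⟨P, hP⟩ := hG.exists_isPath z x
  by_cases heP : s(x, y) ∈ P.edges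
  · have hyP := P.snd_mem_support_of_mem_edges heP
    have hxP := Walk.endpoint_notMem_support_takeUntil hP hyP (P.adj_of_mem_edges heP).ne
    refine Or.inr ⟨(P.takeUntil y hyP).toDeleteEdges _ fun e he hex => hxP ?_⟩
    rw [Set.mem_singleton_iff] at hex
    exact (P.takeUntil y hyP).fst_mem_support_of_mem_edges (hex ▸ he)
  · exact Or.inl ⟨P.toDeleteEdges _ fun e he hex => heP (Set.mem_singleton_iff.mp hex ▸ he)⟩

lemma IsTree.deleteEdges_sup_edge {x y a b : V} (hT : T.IsTree)
    (ha : (T.deleteEdges {s(x, y)}).Reachable x a)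
    (hb : ¬(T.deleteEdges {s(x, y)}).Reachable x b) :
    (T.deleteEdges {s(x, y)} ⊔ edge a b).IsTree := by
  set F := T.deleteEdges {s(x, y)}
  have hab : ¬F.Reachable a b := fun h => hb (ha.trans h)
  have hby : F.Reachable b y :=
    (hT.connected.reachable_deleteEdges_or x y b).resolve_left fun h => hb h.symm
  refine ⟨?_, (hT.isAcyclic.anti (deleteEdges_le _)).sup_edge_of_not_reachable hab⟩
  have hF : F ≤ F ⊔ edge a b := le_sup_left
  have hadj : (F ⊔ edge a b).Adj a b := (le_sup_right : edge a b ≤ F ⊔ edge a b)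
    ((edge_adj ..).mpr ⟨.inl ⟨rfl, rfl⟩, fun h => hab (h ▸ .rfl)⟩)
  have hxy : (F ⊔ edge a b).Reachable x y :=
    ((ha.mono hF).trans hadj.reachable).trans (hby.mono hF)
  have := hT.connected.nonempty
  refine (connected_iff_exists_forall_reachable _).2 ⟨x, fun z => ?_⟩
  rcases hT.connected.reachable_deleteEdges_or x y z with h | h
  · exact (h.mono hF).symm
  · exact hxy.trans (h.mono hF).symm

lemma isAcyclic_of_forall_not_reachable_lightSubgraph (hw : Set.InjOn w H.edgeSet)
    (h : ∀ x y, H.Adj x y → ¬(H.lightSubgraph w (w s(x, y))).Reachable x y) : H.IsAcyclic := by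
  intro u c hc
  obtain ⟨f, hfc, hfmax⟩ := Multiset.exists_max_image w (s := c.edges)
    (by simpa [Walk.edges_eq_nil] using hc.not_nil)
  obtain ⟨x, y⟩ := f
  -- The cycle lives in `K`, and by injectivity of `w` all edges of `K` other than `s(x, y)`
  -- are strictly lighter than it.
  set K := H.deleteEdges {e | w s(x, y) < w e}
  have hcK : ∀ e ∈ c.edges, e ∈ K.edgeSet := fun e he => by
    rw [edgeSet_deleteEdges]
    exact ⟨c.edges_subset_edgeSet he, not_lt.mpr (hfmax e he)⟩
  have hK : K.deleteEdges {s(x, y)} ≤ H.lightSubgraph w (w s(x, y)) := by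
    intro p q hpq
    simp only [K, deleteEdges_adj, Set.mem_singleton_iff] at hpq
    obtain ⟨⟨hpq, hle⟩, hne⟩ := hpq
    have hf : s(x, y) ∈ H.edgeSet := c.edges_subset_edgeSet hfc
    exact (deleteEdges_adj ..).mpr
      ⟨hpq, fun hge => hne (hw hpq hf (le_antisymm (not_lt.mp hle) hge))⟩
  have hreach := (adj_and_reachable_delete_edges_iff_exists_cycle.mpr
    ⟨u, c.transfer K hcK, hc.transfer hcK, by rwa [Walk.edges_transfer]⟩).2
  exact h x y (c.adj_of_mem_edges hfc) (hreach.mono hK)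

end SimpleGraph

lemma totalWeight_eq_add_finsum [Fintype V] {T : SimpleGraph V} {e : Sym2 V} {D : Set (Sym2 V)}
    (hT : T.edgeSet = insert e D) (he : e ∉ D) (w : Sym2 V → ℝ) :
    totalWeight T w = w e + ∑ᶠ d ∈ D, w d := by
  have hD : D.Finite := T.edgeSet.toFinite.subset (hT ▸ Set.subset_insert e D)
  rw [totalWeight, ← finsum_mem_eq_finite_toFinset_sum, hT, finsum_mem_insert _ he hD]

lemma totalWeight_deleteEdges_sup_edge [Fintype V] {T : SimpleGraph V} {x y a b : V}
    (hxy : T.Adj x y) (hab : ¬(T.deleteEdges {s(x, y)}).Reachable a b) (w : Sym2 V → ℝ) :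
    totalWeight (T.deleteEdges {s(x, y)} ⊔ edge a b) w + w s(x, y) =
      totalWeight T w + w s(a, b) := by
  have hab' : s(a, b) ∉ (T.deleteEdges {s(x, y)}).edgeSet := fun h =>
    hab ((mem_edgeSet _).mp h).reachable
  have hne : a ≠ b := fun h => hab (h ▸ .rfl)
  have hT : T.edgeSet = insert s(x, y) (T.deleteEdges {s(x, y)}).edgeSet := by
    rw [edgeSet_deleteEdges, Set.insert_sdiff_singleton,
      Set.insert_eq_of_mem (T.mem_edgeSet.mpr hxy)]
  have hT' : (T.deleteEdges {s(x, y)} ⊔ edge a b).edgeSet =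
      insert s(a, b) (T.deleteEdges {s(x, y)}).edgeSet := by
    rw [edgeSet_sup, edgeSet_edge_of_ne hne, Set.union_singleton]
  rw [totalWeight_eq_add_finsum hT (by simp) w, totalWeight_eq_add_finsum hT' hab' w]
  ring

lemma IsSpanningTree.exists_totalWeight_lt [Fintype V] {G T : SimpleGraph V}
    {w : Sym2 V → ℝ} (hT : IsSpanningTree G T) {x y : V} (hxy : T.Adj x y)
    (hlight : (G.lightSubgraph w (w s(x, y))).Reachable x y) :
    ∃ T', IsSpanningTree G T' ∧ totalWeight T' w < totalWeight T w := by
  set F := T.deleteEdges {s(x, y)}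
  obtain ⟨a, b, hab, ha, hb⟩ := hlight.exists_adj_of_not_reachable (F := F)
    (isBridge_iff.mp (isAcyclic_iff_forall_adj_isBridge.mp hT.2.isAcyclic hxy))
  have hnab : ¬F.Reachable a b := fun h => hb (ha.trans h)
  obtain ⟨habG, hlt⟩ := (deleteEdges_adj ..).mp hab
  have hle : F ⊔ edge a b ≤ G :=
    sup_le ((deleteEdges_le _).trans hT.1) ((edge_le_iff _).mpr (.inr habG))
  refine ⟨F ⊔ edge a b, ⟨hle, hT.2.deleteEdges_sup_edge ha hb⟩, ?_⟩
  have := totalWeight_deleteEdges_sup_edge hxy hnab w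
  have : w s(a, b) < w s(x, y) := not_le.mp hlt
  linarith

lemma SimpleGraph.Connected.exists_isMinSpanningTree [Fintype V] {G : SimpleGraph V}
    (hG : G.Connected) (w : Sym2 V → ℝ) : ∃ T, IsMinSpanningTree G T w := by
  have : Finite (SimpleGraph V) := Finite.of_injective _ SimpleGraph.adj_injective
  obtain ⟨T, hle, hT⟩ := hG.exists_isTree_le
  obtain ⟨T₀, hT₀, hmin⟩ := Set.exists_min_image {T | IsSpanningTree G T} (totalWeight · w)
    (Set.toFinite _) ⟨T, hle, hT⟩
  exact ⟨T₀, hT₀, hmin⟩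

/-- The spanning subgraph of a finite connected graph `G` (with injective edge weights)
whose edges are exactly those edges `uv` of `G` for which there is no path in `G`
between `u` and `v` using only edges of weight strictly less than `w (uv)` is a
minimum spanning tree of `G`. -/
theorem stmt_5 [Fintype V] (G : SimpleGraph V) (hG : G.Connected)
    (w : Sym2 V → ℝ) (hw : Set.InjOn w G.edgeSet)
    (T : SimpleGraph V)
    (hT : ∀ u v : V, T.Adj u v ↔
      (G.Adj u v ∧
        ¬ ∃ p : G.Walk u v, p.IsPath ∧ ∀ e' ∈ p.edges, w e' < w s(u, v))) :
    IsMinSpanningTree G T w := by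
  simp only [exists_isPath_forall_lt_iff_reachable_lightSubgraph] at hT
  have hTG : T ≤ G := fun u v huv => ((hT u v).mp huv).1
  have hTacyclic : T.IsAcyclic :=
    isAcyclic_of_forall_not_reachable_lightSubgraph (hw.mono (edgeSet_mono hTG))
      fun x y hxy hreach => ((hT x y).mp hxy).2 (hreach.mono (lightSubgraph_mono hTG _))
  obtain ⟨T₀, hT₀, hT₀min⟩ := hG.exists_isMinSpanningTree w
  have hT₀T : T₀ ≤ T := fun x y hxy => by
    by_contra hnT
    have hlight : (G.lightSubgraph w (w s(x, y))).Reachable x y := by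
      by_contra h
      exact hnT ((hT x y).mpr ⟨hT₀.1 hxy, h⟩)
    obtain ⟨T', hT', hlt⟩ := hT₀.exists_totalWeight_lt hxy hlight
    exact hlt.not_ge (hT₀min T' hT')
  have := hG.nonempty
  obtain rfl : T₀ = T := (maximal_isAcyclic_iff_isTree.mpr hT₀.2).eq_of_le hTacyclic hT₀T
  exact ⟨hT₀, hT₀min⟩
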